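/- arXiv:2109.05689 — 2 statements merged into one kernel-verified Lean document; each statement's English description precedes it below -/
import Mathlib

section
/- For all θ ∈ (0, 2π/7], γ ∈ [0, (π - 3θ)/2), α ∈ [0, θ], and β ∈ [0, θ] with α + β ≤ θ, and for all reals L, R ≥ 0 with L > 0: L + R·sin θ / cos(θ/2 - (α+β) - γ) - R·cos(θ/2 + γ) / cos(θ/2 - (α+β) - γ) ≤ L - R·(cos(θ/2 + γ) - sin θ). -/
open Real

theorem stmt_10 (θ γ α β L R : ℝ) (hθ0 : 0 < θ) (hθ1 : θ ≤ 2 * π / 7)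
    (hγ0 : 0 ≤ γ) (hγ1 : γ < (π - 3 * θ) / 2)
    (hα : 0 ≤ α) (hβ : 0 ≤ β) (hαβ : α + β ≤ θ) (hL : 0 < L) (hR : 0 ≤ R) :
    L + R * Real.sin θ / Real.cos (θ / 2 - (α + β) - γ)
      - R * Real.cos (θ / 2 + γ) / Real.cos (θ / 2 - (α + β) - γ) ≤
      L - R * (Real.cos (θ / 2 + γ) - Real.sin θ) := by
  have hπ := Real.pi_pos
  set x := θ / 2 - (α + β) - γ with hx
  have hc0 : 0 < Real.cos x := by
    apply Real.cos_pos_of_mem_Ioo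
    constructor
    · simp only [hx]; linarith
    · simp only [hx]; linarith
  have hc1 : Real.cos x ≤ 1 := Real.cos_le_one x
  have h1 : Real.cos (π / 2 - θ) ≤ Real.cos (θ / 2 + γ) :=
    Real.cos_le_cos_of_nonneg_of_le_pi (by linarith) (by linarith) (by linarith)
  rw [Real.cos_pi_div_two_sub] at h1
  have hA : R * (Real.sin θ - Real.cos (θ / 2 + γ)) ≤ 0 := by nlinarith
  have hd : R * (Real.sin θ - Real.cos (θ / 2 + γ)) / Real.cos x ≤
      R * (Real.sin θ - Real.cos (θ / 2 + γ)) := by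
    rw [div_le_iff₀ hc0]; nlinarith
  have heq : R * Real.sin θ / Real.cos x - R * Real.cos (θ / 2 + γ) / Real.cos x =
      R * (Real.sin θ - Real.cos (θ / 2 + γ)) / Real.cos x := by ring
  linarith [heq ▸ hd]
end

section
/- Let k ≥ 7 be an integer, θ = 2π/k, γ ∈ [0, (π - 3θ)/2). Let p, q be distinct points in the plane and suppose q lies in a cone C_p with apex p of angular width θ (the region between two rays from p at angle θ apart). Let r ∈ C_p be a point such that the signed distance from p to the sweeping line through r (the line at angle γ to the perpendicular of the cone's bisector) is at most the corresponding distance for q. Then |rq| ≤ |pq| - (cos(θ/2 + γ) - sin θ)·|pr|. -/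
open Real

/-!
Write `r = p + a e^{iα}` and `q = p + b e^{iβ}`, and measure angles from the sweep direction
`φ + γ`: then `u = α - (φ + γ)` and `v = β - (φ + γ)` lie in `[-m, m]` with `m = θ/2 + γ`,
`|v - u| ≤ θ`, and the sweep hypothesis reads `a cos u ≤ b cos v`. By the law of cosines the
claim squares to `a (1 - c²) ≤ 2 b (cos (v - u) - c)` with `c = cos m - sin θ`, which after
`b cos v ≥ a cos u` becomes `(1 - c²) cos v ≤ 2 cos u (cos (v - u) - c)`. Here `cos v`
times the gap equals `(cos u - c cos v)² - sin² (v - u)`, and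
`|sin (v - u)| ≤ sin θ = cos m - c ≤ cos u - c cos v` because `m + θ < π/2`.
-/

namespace Complex

lemma re_ofReal_mul_exp_mul_conj_exp (t ψ χ : ℝ) :
    ((t : ℂ) * exp (ψ * I) * (starRingEnd ℂ) (exp (χ * I))).re = t * Real.cos (ψ - χ) := by
  rw [← exp_conj, map_mul, conj_ofReal, conj_I, mul_assoc, ← exp_add,
    show (ψ : ℂ) * I + χ * -I = ((ψ - χ : ℝ) : ℂ) * I by push_cast; ring,
    re_ofReal_mul, exp_ofReal_mul_I_re]

lemma norm_ofReal_mul_exp_sub_sq (a b α β : ℝ) :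
    ‖(a : ℂ) * exp (α * I) - b * exp (β * I)‖ ^ 2 =
      a ^ 2 + b ^ 2 - 2 * a * b * Real.cos (β - α) := by
  rw [Complex.sq_norm, normSq_apply]
  simp only [sub_re, sub_im, re_ofReal_mul, im_ofReal_mul, exp_ofReal_mul_I_re,
    exp_ofReal_mul_I_im, Real.cos_sub]
  linear_combination a ^ 2 * Real.sin_sq_add_cos_sq α + b ^ 2 * Real.sin_sq_add_cos_sq β

lemma dist_self_add_ofReal_mul_exp (p : ℂ) {t : ℝ} (ht : 0 ≤ t) (ψ : ℝ) :
    dist p (p + t * exp (ψ * I)) = t := by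
  rw [dist_self_add_right, norm_mul, norm_exp_ofReal_mul_I, mul_one, norm_real,
    Real.norm_of_nonneg ht]

end Complex

section Sweep

variable {θ m u v : ℝ}

lemma sin_le_cos_of_add_le_pi_div_two (h0 : 0 ≤ θ) (hm : 0 ≤ m) (h : m + θ ≤ π / 2) :
    Real.sin θ ≤ Real.cos m := by
  rw [← Real.cos_pi_div_two_sub]
  exact Real.cos_le_cos_of_nonneg_of_le_pi hm (by linarith [pi_pos]) (by linarith)

lemma cos_le_cos_of_abs_le (h : |u| ≤ m) (hm : m ≤ π) : Real.cos m ≤ Real.cos u := by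
  rw [← Real.cos_abs u]
  exact Real.cos_le_cos_of_nonneg_of_le_pi (abs_nonneg u) hm h

lemma one_sub_sq_mul_cos_le (hm : m + θ < π / 2) (hu : |u| ≤ m) (hv : |v| ≤ m)
    (hδ : |v - u| ≤ θ) :
    (1 - (Real.cos m - Real.sin θ) ^ 2) * Real.cos v ≤
      2 * Real.cos u * (Real.cos (v - u) - (Real.cos m - Real.sin θ)) := by
  set c := Real.cos m - Real.sin θ
  have hθ0 : 0 ≤ θ := (abs_nonneg _).trans hδ
  have hm0 : 0 ≤ m := (abs_nonneg _).trans hu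
  have hmπ : m ≤ π := by linarith [pi_pos]
  have hcos_m : 0 < Real.cos m := Real.cos_pos_of_mem_Ioo ⟨by linarith, by linarith⟩
  have hcos_v : 0 < Real.cos v := hcos_m.trans_le (cos_le_cos_of_abs_le hv hmπ)
  have hc : 0 ≤ c := sub_nonneg.2 (sin_le_cos_of_add_le_pi_div_two hθ0 hm0 hm.le)
  have hsin : |Real.sin (v - u)| ≤ Real.sin θ := by
    rw [abs_sin_eq_sin_abs_of_abs_le_pi (by linarith)]
    exact Real.sin_le_sin_of_le_of_le_pi_div_two (by linarith [abs_nonneg (v - u)])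
      (by linarith) hδ
  have hgap : Real.sin θ ≤ Real.cos u - c * Real.cos v := by
    nlinarith [cos_le_cos_of_abs_le hu hmπ, Real.cos_le_one v]
  have hsq : Real.sin (v - u) ^ 2 ≤ (Real.cos u - c * Real.cos v) ^ 2 := by
    rw [← sq_abs]
    exact pow_le_pow_left₀ (abs_nonneg _) (hsin.trans hgap) 2
  have hid : Real.cos v * (2 * Real.cos u * (Real.cos (v - u) - c) - (1 - c ^ 2) * Real.cos v) =
      (Real.cos u - c * Real.cos v) ^ 2 - Real.sin (v - u) ^ 2 := by
    rw [Real.cos_sub, Real.sin_sub]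
    linear_combination Real.cos v ^ 2 * Real.sin_sq_add_cos_sq u +
      Real.cos u ^ 2 * Real.sin_sq_add_cos_sq v
  have := nonneg_of_mul_nonneg_right (hid ▸ sub_nonneg.2 hsq) hcos_v
  linarith

lemma sq_le_sq_of_sweep (hm : m + θ < π / 2) (hu : |u| ≤ m) (hv : |v| ≤ m)
    (hδ : |v - u| ≤ θ) {a b : ℝ} (ha : 0 ≤ a) (hb : 0 ≤ b)
    (hclose : a * Real.cos u ≤ b * Real.cos v) :
    a ^ 2 + b ^ 2 - 2 * a * b * Real.cos (v - u) ≤ (b - (Real.cos m - Real.sin θ) * a) ^ 2 ∧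
      0 ≤ b - (Real.cos m - Real.sin θ) * a := by
  set c := Real.cos m - Real.sin θ
  have hθ0 : 0 ≤ θ := (abs_nonneg _).trans hδ
  have hm0 : 0 ≤ m := (abs_nonneg _).trans hu
  have hmπ : m ≤ π := by linarith [pi_pos]
  have hcos_u := cos_le_cos_of_abs_le hu hmπ
  have hcos_v := cos_le_cos_of_abs_le hv hmπ
  have hcos_m : 0 < Real.cos m := Real.cos_pos_of_mem_Ioo ⟨by linarith, by linarith⟩
  have hc0 : 0 ≤ c := sub_nonneg.2 (sin_le_cos_of_add_le_pi_div_two hθ0 hm0 hm.le)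
  have hc1 : c ≤ Real.cos m := sub_le_self _ (Real.sin_nonneg_of_nonneg_of_le_pi hθ0 (by linarith))
  have hkey := one_sub_sq_mul_cos_le hm hu hv hδ
  have hcδ : 0 ≤ Real.cos (v - u) - c := by
    have h1 : 0 ≤ 1 - c ^ 2 := by nlinarith [Real.cos_le_one m]
    have h2 : 0 ≤ 2 * Real.cos u * (Real.cos (v - u) - c) :=
      (mul_nonneg h1 (hcos_m.le.trans hcos_v)).trans hkey
    exact nonneg_of_mul_nonneg_right h2 (by linarith)
  have hlin : a * (1 - c ^ 2) ≤ 2 * b * (Real.cos (v - u) - c) := by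
    refine le_of_mul_le_mul_right ?_ (hcos_m.trans_le hcos_v)
    nlinarith [mul_le_mul_of_nonneg_left hkey ha, mul_le_mul_of_nonneg_right hclose hcδ]
  constructor
  · nlinarith [mul_le_mul_of_nonneg_left hlin ha]
  · nlinarith [Real.cos_le_one v]

end Sweep

/-- The cone with apex `p`, bisector direction `φ` and aperture `θ` is
`{p + t e^{iψ} | t > 0, |ψ - φ| ≤ θ/2}`; sweeping lines are perpendicular to `e^{i(φ+γ)}`, so
the sweep order compares `Re ((x - p) * conj e^{i(φ+γ)})`. -/
theorem stmt_11_general (θ γ φ : ℝ)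
    (hγ0 : 0 ≤ γ) (hγ1 : γ < (π - 3 * θ) / 2)
    (p q r : ℂ)
    (hq : ∃ t ψ : ℝ, 0 < t ∧ |ψ - φ| ≤ θ / 2 ∧ q = p + t * Complex.exp (ψ * Complex.I))
    (hr : ∃ t ψ : ℝ, 0 < t ∧ |ψ - φ| ≤ θ / 2 ∧ r = p + t * Complex.exp (ψ * Complex.I))
    (hclose : ((r - p) * (starRingEnd ℂ) (Complex.exp ((φ + γ) * Complex.I))).re ≤
      ((q - p) * (starRingEnd ℂ) (Complex.exp ((φ + γ) * Complex.I))).re) :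
    dist r q ≤ dist p q - (Real.cos (θ / 2 + γ) - Real.sin θ) * dist p r := by
  obtain ⟨b, β, hb, hβ, rfl⟩ := hq
  obtain ⟨a, α, ha, hα, rfl⟩ := hr
  have hangle (ψ : ℝ) (hψ : |ψ - φ| ≤ θ / 2) : |ψ - (φ + γ)| ≤ θ / 2 + γ := by
    rw [abs_le] at hψ ⊢; constructor <;> linarith
  rw [add_sub_cancel_left, add_sub_cancel_left, ← Complex.ofReal_add,
    Complex.re_ofReal_mul_exp_mul_conj_exp, Complex.re_ofReal_mul_exp_mul_conj_exp] at hclose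
  obtain ⟨hsq, hnonneg⟩ := sq_le_sq_of_sweep (θ := θ) (by linarith) (hangle α hα) (hangle β hβ)
    (by rw [abs_le] at hα hβ ⊢; constructor <;> linarith) ha.le hb.le hclose
  rw [Complex.dist_self_add_ofReal_mul_exp p ha.le, Complex.dist_self_add_ofReal_mul_exp p hb.le,
    ← pow_le_pow_iff_left₀ dist_nonneg hnonneg two_ne_zero, dist_add_left, dist_eq_norm,
    Complex.norm_ofReal_mul_exp_sub_sq]
  simpa only [sub_sub_sub_cancel_right] using hsq

/-- Main geometric lemma (Lemma 7). The plane is modeled as `ℂ`; the cone with apex `p`,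
bisector direction at angle `φ`, and aperture `θ` consists of points
`p + t * exp(ψ * I)` with `t > 0` and `|ψ - φ| ≤ θ/2`. The sweeping line through a point
`x` is perpendicular to the direction `exp((φ + γ) * I)`, so `x` is at least as close to
`p` as `y` (in sweeping-line order) iff `⟪x - p, exp((φ+γ)I)⟫ ≤ ⟪y - p, exp((φ+γ)I)⟫`. -/
theorem stmt_11 (k : ℤ) (hk : 7 ≤ k) (θ γ φ : ℝ) (hθ : θ = 2 * π / k)
    (hγ0 : 0 ≤ γ) (hγ1 : γ < (π - 3 * θ) / 2)
    (p q r : ℂ) (hpq : p ≠ q)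
    (hq : ∃ t ψ : ℝ, 0 < t ∧ |ψ - φ| ≤ θ / 2 ∧ q = p + t * Complex.exp (ψ * Complex.I))
    (hr : ∃ t ψ : ℝ, 0 < t ∧ |ψ - φ| ≤ θ / 2 ∧ r = p + t * Complex.exp (ψ * Complex.I))
    (hclose : ((r - p) * (starRingEnd ℂ) (Complex.exp ((φ + γ) * Complex.I))).re ≤
      ((q - p) * (starRingEnd ℂ) (Complex.exp ((φ + γ) * Complex.I))).re) :
    dist r q ≤ dist p q - (Real.cos (θ / 2 + γ) - Real.sin θ) * dist p r :=
  stmt_11_general θ γ φ hγ0 hγ1 p q r hq hr hclose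
end
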